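/- arXiv:1309.1601 — 5 statements merged into one kernel-verified Lean document; each statement's English description precedes it below -/
import Mathlib

section
/- Let $p,q$ be positive integers and $c,d,a,b>0$ satisfy $a^2/c^2+b^2/d^2=1$. Set $E = (p c^4/a^4 + q d^4/b^4) - \frac{1}{a^2/c^4 + b^2/d^4}\left(\frac{c^2}{a^2}+\frac{d^2}{b^2}\right)\left(\frac{p}{c^2}+\frac{q}{d^2}\right)$. Then $E = 0$ holds when $a^2 = c^3/(c+d)$ and $b^2 = d^3/(c+d)$. -/
/-
With $s = c + d$, the hypotheses give $c^2/a^2 = s/c$, $d^2/b^2 = s/d$ and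
$a^2/c^4 + b^2/d^4 = (1/c + 1/d)/s = 1/(cd)$, so the subtracted term is
$cd \cdot s^2/(cd) \cdot (p/c^2 + q/d^2)$, which is exactly $p c^4/a^4 + q d^4/b^4 = s^2(p/c^2 + q/d^2)$.
-/

section

variable {a c s : ℝ}

lemma sq_div_sq_of_sq_eq (hc : c ≠ 0) (ha2 : a ^ 2 = c ^ 3 / s) : c ^ 2 / a ^ 2 = s / c := by
  rw [ha2]
  field_simp

lemma pow_four_div_pow_four_of_sq_eq (hc : c ≠ 0) (ha2 : a ^ 2 = c ^ 3 / s) :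
    c ^ 4 / a ^ 4 = (s / c) ^ 2 := by
  rw [← sq_div_sq_of_sq_eq hc ha2]
  ring

lemma sq_div_pow_four_of_sq_eq (hc : c ≠ 0) (ha2 : a ^ 2 = c ^ 3 / s) :
    a ^ 2 / c ^ 4 = 1 / (s * c) := by
  rw [ha2]
  field_simp

end

lemma one_div_mul_add_one_div_mul_add {c d : ℝ} (hc : c ≠ 0) (hd : d ≠ 0) (hcd : c + d ≠ 0) :
    1 / ((c + d) * c) + 1 / ((c + d) * d) = 1 / (c * d) := by
  field_simp
  ring

theorem stmt_2_general (p q : ℕ) (c d a b : ℝ)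
    (hc : 0 < c) (hd : 0 < d)
    (ha2 : a ^ 2 = c ^ 3 / (c + d)) (hb2 : b ^ 2 = d ^ 3 / (c + d)) :
    ((p : ℝ) * c ^ 4 / a ^ 4 + (q : ℝ) * d ^ 4 / b ^ 4) -
      (1 / (a ^ 2 / c ^ 4 + b ^ 2 / d ^ 4)) * (c ^ 2 / a ^ 2 + d ^ 2 / b ^ 2) *
        ((p : ℝ) / c ^ 2 + (q : ℝ) / d ^ 2) = 0 := by
  have hc0 := hc.ne'
  have hd0 := hd.ne'
  rw [mul_div_assoc, mul_div_assoc, pow_four_div_pow_four_of_sq_eq hc0 ha2,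
    pow_four_div_pow_four_of_sq_eq hd0 hb2, sq_div_pow_four_of_sq_eq hc0 ha2,
    sq_div_pow_four_of_sq_eq hd0 hb2, one_div_mul_add_one_div_mul_add hc0 hd0 (by positivity),
    sq_div_sq_of_sq_eq hc0 ha2, sq_div_sq_of_sq_eq hd0 hb2]
  field_simp
  ring

theorem stmt_2 (p q : ℕ) (hp : 0 < p) (hq : 0 < q) (c d a b : ℝ)
    (hc : 0 < c) (hd : 0 < d) (ha : 0 < a) (hb : 0 < b)
    (hcon : a ^ 2 / c ^ 2 + b ^ 2 / d ^ 2 = 1)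
    (ha2 : a ^ 2 = c ^ 3 / (c + d)) (hb2 : b ^ 2 = d ^ 3 / (c + d)) :
    ((p : ℝ) * c ^ 4 / a ^ 4 + (q : ℝ) * d ^ 4 / b ^ 4) -
      (1 / (a ^ 2 / c ^ 4 + b ^ 2 / d ^ 4)) * (c ^ 2 / a ^ 2 + d ^ 2 / b ^ 2) *
        ((p : ℝ) / c ^ 2 + (q : ℝ) / d ^ 2) = 0 :=
  stmt_2_general p q c d a b hc hd ha2 hb2
end

section
/- Let $c,d,a,b>0$ with $a^2/c^2 + b^2/d^2 = 1$. Then $\frac{c^4}{a^4} - \frac{1}{a^2/c^4+b^2/d^4}\left(\frac{c^2}{a^2}+\frac{d^2}{b^2}\right)\frac{1}{c^2} = 0$ if and only if $a^2 = c^3/(c+d)$ and $b^2 = d^3/(c+d)$. -/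
/-!
Put `A = a²`, `B = b²` and clear denominators in the ellipse relation: `A d² + B c² = c² d²`.
This relation collapses `c²/A + d²/B` to `c² d² / (A B)`, after which the expression becomes
`c² ((c³ B)² - (d³ A)²) / (A² B (A d⁴ + B c⁴))`. It therefore vanishes exactly when
`c³ B = d³ A`, and together with the ellipse relation this linear condition pins down
`A = c³/(c+d)`, `B = d³/(c+d)`.
-/

lemma normal_bitension_eq {c d A B : ℝ} (hc : 0 < c) (hd : 0 < d) (hA : 0 < A) (hB : 0 < B)
    (hcon : A * d ^ 2 + B * c ^ 2 = c ^ 2 * d ^ 2) :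
    c ^ 4 / A ^ 2 - 1 / (A / c ^ 4 + B / d ^ 4) * (c ^ 2 / A + d ^ 2 / B) * (1 / c ^ 2) =
      c ^ 2 * ((c ^ 3 * B) ^ 2 - (d ^ 3 * A) ^ 2) / (A ^ 2 * B * (A * d ^ 4 + B * c ^ 4)) := by
  have hsum : c ^ 2 / A + d ^ 2 / B = c ^ 2 * d ^ 2 / (A * B) := by
    rw [div_add_div _ _ hA.ne' hB.ne', ← hcon]; ring
  rw [hsum]
  field_simp
  linear_combination A * d ^ 4 * hcon

lemma cube_mul_eq_cube_mul_iff_of_ellipse {c d A B : ℝ} (hc : 0 < c) (hd : 0 < d)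
    (hcon : A * d ^ 2 + B * c ^ 2 = c ^ 2 * d ^ 2) :
    c ^ 3 * B = d ^ 3 * A ↔ A = c ^ 3 / (c + d) ∧ B = d ^ 3 / (c + d) := by
  have hcd : c + d ≠ 0 := by positivity
  constructor
  · intro key
    rw [eq_div_iff hcd, eq_div_iff hcd]
    constructor
    · apply mul_right_cancel₀ (pow_ne_zero 2 hd.ne')
      linear_combination c * hcon - key
    · apply mul_right_cancel₀ (pow_ne_zero 2 hc.ne')
      linear_combination d * hcon + key
  · rintro ⟨rfl, rfl⟩
    ring

theorem stmt_3 (c d a b : ℝ) (hc : 0 < c) (hd : 0 < d) (ha : 0 < a) (hb : 0 < b)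
    (hcon : a ^ 2 / c ^ 2 + b ^ 2 / d ^ 2 = 1) :
    c ^ 4 / a ^ 4 -
      (1 / (a ^ 2 / c ^ 4 + b ^ 2 / d ^ 4)) * (c ^ 2 / a ^ 2 + d ^ 2 / b ^ 2) * (1 / c ^ 2) = 0 ↔
      a ^ 2 = c ^ 3 / (c + d) ∧ b ^ 2 = d ^ 3 / (c + d) := by
  have hcon' : a ^ 2 * d ^ 2 + b ^ 2 * c ^ 2 = c ^ 2 * d ^ 2 := by
    field_simp at hcon; linarith
  have ha4 : a ^ 4 = (a ^ 2) ^ 2 := by ring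
  rw [ha4, normal_bitension_eq hc hd (by positivity) (by positivity) hcon',
    div_eq_zero_iff, or_iff_left (by positivity), mul_eq_zero, or_iff_right (by positivity),
    sub_eq_zero, sq_eq_sq₀ (by positivity) (by positivity),
    cube_mul_eq_cube_mul_iff_of_ellipse hc hd hcon']
end

section
/- Let $p,q\in\mathbb{Z}_{>0}$ and $c,d>0$ with $c=p$ and $d=q$. Then the minimality radii $a^2 = c^2 p/(p+q)$, $b^2 = d^2 q/(p+q)$ and the biharmonicity radii $a^2 = c^3/(c+d)$, $b^2 = d^3/(c+d)$ coincide. Consequently, in the ellipsoid $Q^{p+q+1}(p,q)$ there is no proper biharmonic generalized Clifford torus of the form $S^p(a)\times S^q(b)$. -/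
theorem stmt_14_general (p q : ℕ) (c d : ℝ)
    (hc : c = (p : ℝ)) (hd : d = (q : ℝ)) :
    c ^ 2 * p / (p + q) = c ^ 3 / (c + d) ∧
      d ^ 2 * q / (p + q) = d ^ 3 / (c + d) ∧
      ∀ a b : ℝ, a ^ 2 = c ^ 3 / (c + d) → b ^ 2 = d ^ 3 / (c + d) →
        a ^ 2 = c ^ 2 * p / (p + q) ∧ b ^ 2 = d ^ 2 * q / (p + q) := by
  subst hc hd
  have hradius_a : (p : ℝ) ^ 2 * p / (p + q) = (p : ℝ) ^ 3 / (p + q) := by ring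
  have hradius_b : (q : ℝ) ^ 2 * q / (p + q) = (q : ℝ) ^ 3 / (p + q) := by ring
  exact ⟨hradius_a, hradius_b, fun a b ha hb => ⟨ha.trans hradius_a.symm, hb.trans hradius_b.symm⟩⟩

theorem stmt_14 (p q : ℕ) (hp : 0 < p) (hq : 0 < q) (c d : ℝ)
    (hc : c = (p : ℝ)) (hd : d = (q : ℝ)) :
    c ^ 2 * p / (p + q) = c ^ 3 / (c + d) ∧
      d ^ 2 * q / (p + q) = d ^ 3 / (c + d) ∧
      ∀ a b : ℝ, a ^ 2 = c ^ 3 / (c + d) → b ^ 2 = d ^ 3 / (c + d) →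
        a ^ 2 = c ^ 2 * p / (p + q) ∧ b ^ 2 = d ^ 2 * q / (p + q) :=
  stmt_14_general p q c d hc hd
end

section
/- Let $c,d>0$, $p\in\mathbb{Z}_{>0}$, and $a,b$ with $a>0$, $0<|b|<d$, $a^2/c^2+b^2/d^2=1$. Then $\frac{p c^4}{a^4} - \frac{1}{a^2/c^4+b^2/d^4}\left(\frac{c^2}{a^2}+\frac{d^2}{b^2}\right)\frac{p}{c^2} = 0$ if and only if $a = c\sqrt{c/(c+d)}$ and $b = \pm d\sqrt{d/(c+d)}$. -/
/-!
Clearing denominators, the equation reads `(c³ b²)² = (d³ a²)²`, i.e. `c³ b² = d³ a²`. Together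
with the equation `a²/c² + b²/d² = 1` of the ellipse this is a linear system in `a²` and `b²`,
whose only solution is `a² = c³/(c+d)`, `b² = d³/(c+d)`.
-/

open Real

/-- The normal component of the bitension field of `S^p(a) × {b}` in `Q^{p+1}(c,d)`, divided by
`-λ`. -/
noncomputable def normalBitension (p a b c d : ℝ) : ℝ :=
  p * c ^ 4 / a ^ 4 - 1 / (a ^ 2 / c ^ 4 + b ^ 2 / d ^ 4) * (c ^ 2 / a ^ 2 + d ^ 2 / b ^ 2) * (p / c ^ 2)

theorem normalBitension_eq_div {p a b c d : ℝ} (ha : a ≠ 0) (hb : b ≠ 0) (hc : c ≠ 0)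
    (hd : d ≠ 0) :
    normalBitension p a b c d = p * c ^ 2 * ((c ^ 3 * b ^ 2) ^ 2 - (d ^ 3 * a ^ 2) ^ 2) /
      (a ^ 4 * b ^ 2 * (a ^ 2 * d ^ 4 + c ^ 4 * b ^ 2)) := by
  have hD : a ^ 2 * d ^ 4 + c ^ 4 * b ^ 2 ≠ 0 := by positivity
  rw [normalBitension, div_add_div _ _ (by positivity) (by positivity)]
  field_simp
  ring

theorem cube_mul_eq_cube_mul_iff_of_div_add_div_eq_one {c d x y : ℝ} (hc : 0 < c) (hd : 0 < d)
    (hcon : x / c ^ 2 + y / d ^ 2 = 1) :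
    c ^ 3 * y = d ^ 3 * x ↔ x = c ^ 3 / (c + d) ∧ y = d ^ 3 / (c + d) := by
  have hcd : c + d ≠ 0 := by positivity
  field_simp at hcon ⊢
  constructor
  · intro h
    refine ⟨mul_right_cancel₀ (pow_ne_zero 2 hd.ne') ?_, mul_right_cancel₀ (pow_ne_zero 2 hc.ne') ?_⟩
    · linear_combination c * hcon - h
    · linear_combination d * hcon + h
  · rintro ⟨hx, hy⟩
    refine mul_right_cancel₀ hcd ?_
    linear_combination c ^ 3 * hy - d ^ 3 * hx

theorem mul_sqrt_div_sq {c s : ℝ} (hc : 0 ≤ c) (hs : 0 ≤ s) : (c * √(c / s)) ^ 2 = c ^ 3 / s := by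
  rw [mul_pow, sq_sqrt (by positivity)]
  ring

theorem stmt_15_general (c d : ℝ) (hc : 0 < c) (hd : 0 < d) (p : ℕ) (hp : 0 < p)
    (a b : ℝ) (ha : 0 < a) (hb0 : 0 < |b|)
    (hcon : a ^ 2 / c ^ 2 + b ^ 2 / d ^ 2 = 1) :
    (p : ℝ) * c ^ 4 / a ^ 4 -
        (1 / (a ^ 2 / c ^ 4 + b ^ 2 / d ^ 4)) * (c ^ 2 / a ^ 2 + d ^ 2 / b ^ 2) *
          ((p : ℝ) / c ^ 2) = 0 ↔
      a = c * Real.sqrt (c / (c + d)) ∧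
        (b = d * Real.sqrt (d / (c + d)) ∨ b = -(d * Real.sqrt (d / (c + d)))) := by
  change normalBitension p a b c d = 0 ↔ _
  have hb : b ≠ 0 := abs_pos.mp hb0
  have hpc : (p : ℝ) * c ^ 2 ≠ 0 := by positivity
  have hden : a ^ 4 * b ^ 2 * (a ^ 2 * d ^ 4 + c ^ 4 * b ^ 2) ≠ 0 := by positivity
  have hcd : 0 ≤ c + d := by positivity
  rw [normalBitension_eq_div ha.ne' hb hc.ne' hd.ne', div_eq_zero_iff, or_iff_left hden,
    mul_eq_zero, or_iff_right hpc, sub_eq_zero, sq_eq_sq₀ (by positivity) (by positivity),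
    cube_mul_eq_cube_mul_iff_of_div_add_div_eq_one hc hd hcon, ← mul_sqrt_div_sq hc.le hcd,
    ← mul_sqrt_div_sq hd.le hcd, sq_eq_sq₀ ha.le (by positivity), sq_eq_sq_iff_eq_or_eq_neg]

theorem stmt_15 (c d : ℝ) (hc : 0 < c) (hd : 0 < d) (p : ℕ) (hp : 0 < p)
    (a b : ℝ) (ha : 0 < a) (hb0 : 0 < |b|) (hbd : |b| < d)
    (hcon : a ^ 2 / c ^ 2 + b ^ 2 / d ^ 2 = 1) :
    (p : ℝ) * c ^ 4 / a ^ 4 -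
        (1 / (a ^ 2 / c ^ 4 + b ^ 2 / d ^ 4)) * (c ^ 2 / a ^ 2 + d ^ 2 / b ^ 2) *
          ((p : ℝ) / c ^ 2) = 0 ↔
      a = c * Real.sqrt (c / (c + d)) ∧
        (b = d * Real.sqrt (d / (c + d)) ∨ b = -(d * Real.sqrt (d / (c + d)))) :=
  stmt_15_general c d hc hd p hp a b ha hb0 hcon
end

section
/- Let $c,d,a>0$ and $b\neq 0$ with $a^2/c^2+b^2/d^2=1$, and let $m$ be a positive integer. Define $\nu = m\frac{c^2}{a^2}\frac{1}{\sqrt{c^4/a^2+d^4/b^2}}$. Then $\nu > 0$, and the expression $\frac{m c^4}{a^4} - \frac{1}{a^2/c^4+b^2/d^4}\left(\frac{c^2}{a^2}+\frac{d^2}{b^2}\right)\frac{m}{c^2}$ vanishes if and only if $a^2 = c^3/(c+d)$ and $b^2 = d^3/(c+d)$; in particular the vanishing condition is independent of $m$. -/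
/-! Over the common denominator the bitension coefficient has numerator
`m c² ((c³b²)² - (d³a²)²)`, so it vanishes iff `c³b² = d³a²`, a condition in which `m` no
longer appears. On the ellipse `a²/c² + b²/d² = 1` this proportionality fixes `a²` and `b²`. -/

theorem bitension_coeff_eq (m : ℝ) {c d a b : ℝ} (hc : c ≠ 0) (hd : d ≠ 0) (ha : a ≠ 0)
    (hb : b ≠ 0) :
    m * c ^ 4 / a ^ 4 - (1 / (a ^ 2 / c ^ 4 + b ^ 2 / d ^ 4)) * (c ^ 2 / a ^ 2 + d ^ 2 / b ^ 2) *
        (m / c ^ 2) =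
      m * c ^ 2 * ((c ^ 3 * b ^ 2) ^ 2 - (d ^ 3 * a ^ 2) ^ 2) /
        (a ^ 4 * b ^ 2 * (a ^ 2 * d ^ 4 + b ^ 2 * c ^ 4)) := by
  field_simp
  ring

theorem bitension_coeff_eq_zero_iff {m c d a b : ℝ} (hm : m ≠ 0) (hc : 0 < c) (hd : 0 < d)
    (ha : a ≠ 0) (hb : b ≠ 0) :
    m * c ^ 4 / a ^ 4 - (1 / (a ^ 2 / c ^ 4 + b ^ 2 / d ^ 4)) * (c ^ 2 / a ^ 2 + d ^ 2 / b ^ 2) *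
        (m / c ^ 2) = 0 ↔ c ^ 3 * b ^ 2 = d ^ 3 * a ^ 2 := by
  have hden : a ^ 4 * b ^ 2 * (a ^ 2 * d ^ 4 + b ^ 2 * c ^ 4) ≠ 0 := by positivity
  rw [bitension_coeff_eq m hc.ne' hd.ne' ha hb, div_eq_zero_iff, mul_eq_zero, sub_eq_zero,
    sq_eq_sq₀ (by positivity) (by positivity)]
  simp [hm, hc.ne', hden]

theorem cube_mul_eq_iff_of_div_sq_add_div_sq {c d x y : ℝ} (hc : 0 < c) (hd : 0 < d)
    (hxy : x / c ^ 2 + y / d ^ 2 = 1) :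
    c ^ 3 * y = d ^ 3 * x ↔ x = c ^ 3 / (c + d) ∧ y = d ^ 3 / (c + d) := by
  have hcd : c + d ≠ 0 := by positivity
  have hxy' : d ^ 2 * x + c ^ 2 * y = c ^ 2 * d ^ 2 := by
    field_simp at hxy
    linear_combination hxy
  rw [eq_div_iff hcd, eq_div_iff hcd]
  constructor
  · intro h
    constructor
    · apply mul_left_cancel₀ (pow_ne_zero 2 hd.ne')
      linear_combination c * hxy' - h
    · apply mul_left_cancel₀ (pow_ne_zero 2 hc.ne')
      linear_combination d * hxy' + h
  · rintro ⟨hx, hy⟩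
    apply mul_left_cancel₀ hcd
    linear_combination c ^ 3 * hy - d ^ 3 * hx

theorem stmt_19 (c d a : ℝ) (b : ℝ) (hc : 0 < c) (hd : 0 < d) (ha : 0 < a) (hb : b ≠ 0)
    (hcon : a ^ 2 / c ^ 2 + b ^ 2 / d ^ 2 = 1) (m : ℕ) (hm : 0 < m) :
    0 < (m : ℝ) * (c ^ 2 / a ^ 2) * (1 / Real.sqrt (c ^ 4 / a ^ 2 + d ^ 4 / b ^ 2)) ∧
      ((m : ℝ) * c ^ 4 / a ^ 4 -
          (1 / (a ^ 2 / c ^ 4 + b ^ 2 / d ^ 4)) * (c ^ 2 / a ^ 2 + d ^ 2 / b ^ 2) *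
            ((m : ℝ) / c ^ 2) = 0 ↔
        a ^ 2 = c ^ 3 / (c + d) ∧ b ^ 2 = d ^ 3 / (c + d)) := by
  have hm' : (0 : ℝ) < m := Nat.cast_pos.mpr hm
  constructor
  · have : 0 < Real.sqrt (c ^ 4 / a ^ 2 + d ^ 4 / b ^ 2) := Real.sqrt_pos.mpr (by positivity)
    positivity
  · rw [bitension_coeff_eq_zero_iff hm'.ne' hc hd ha.ne' hb]
    exact cube_mul_eq_iff_of_div_sq_add_div_sq hc hd hcon
end
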